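/- Let G and G' be achievement positional games on disjoint vertex sets. If o(G)=D (the game G is a draw with optimal play whichever player starts), then o(G∪G')=o(G'). -/

import Mathlib

namespace APG

/-- The two players: Left and Right. -/
inductive Player : Type
  | L : Player
  | R : Player
deriving DecidableEq, Repr

/-- The opponent of a player. -/
def Player.other : Player → Player
  | .L => .R
  | .R => .L

/-- An achievement positional game: a finite vertex set together with the set of
blue edges (Left's winning sets) and the set of red edges (Right's winning sets). -/
structure Game : Type where
  V : Finset ℕ
  EL : Finset (Finset ℕ)
  ER : Finset (Finset ℕ)

/-- The edges are nonempty subsets of the vertex set. -/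
def WellFormed (G : Game) : Prop :=
  (∀ e ∈ G.EL, e ⊆ G.V ∧ e.Nonempty) ∧ (∀ e ∈ G.ER, e ⊆ G.V ∧ e.Nonempty)

/-- The winning sets of a given player. -/
def Game.edges (G : Game) : Player → Finset (Finset ℕ)
  | .L => G.EL
  | .R => G.ER

/-- The player who makes the `i`-th move (0-indexed) when `s` moves first. -/
def mover (s : Player) (i : ℕ) : Player := if i % 2 = 0 then s else s.other

/-- The set of vertices picked by player `p` along the history `h`
(the chronological list of the moves played so far), when `s` moved first. -/
def picked (s p : Player) (h : List ℕ) : Finset ℕ :=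
  ((Finset.range h.length).filter fun i => mover s i = p).image fun i => h.getD i 0

/-- The set `S` of picked vertices fills some edge of `E`. -/
def fills (E : Finset (Finset ℕ)) (S : Finset ℕ) : Prop := ∃ e ∈ E, e ⊆ S

/-- The game is over: some player has picked all the vertices of one of their edges. -/
def ended (G : Game) (s : Player) (h : List ℕ) : Prop :=
  fills G.EL (picked s .L h) ∨ fills G.ER (picked s .R h)

/-- `h` is a legal history: no vertex is picked twice, every picked vertex belongs to
the board, and no move is made after the game has ended. -/
def ValidHist (G : Game) (s : Player) (h : List ℕ) : Prop :=
  h.Nodup ∧ (∀ x ∈ h, x ∈ G.V) ∧ ∀ k, k < h.length → ¬ ended G s (h.take k)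

/-- A strategy: a map assigning to each position (history) a vertex to pick. -/
abbrev Strategy := List ℕ → ℕ

/-- Along `h`, every move of player `p` agrees with the strategy `σ`. -/
def Follows (s p : Player) (σ : Strategy) (h : List ℕ) : Prop :=
  ∀ k, k < h.length → mover s k = p → h.getD k 0 = σ (h.take k)

/-- A finished play: either the game has ended or all vertices have been picked. -/
def Complete (G : Game) (s : Player) (h : List ℕ) : Prop :=
  ended G s h ∨ h.length = G.V.card

/-- The strategy `σ` of player `p` always suggests a legal move (an unpicked vertex)
whenever the game is not over and it is `p`'s turn. -/
def Legal (G : Game) (s p : Player) (σ : Strategy) : Prop :=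
  ∀ h, ValidHist G s h → Follows s p σ h → ¬ ended G s h → h.length < G.V.card →
    mover s h.length = p → σ h ∈ G.V ∧ σ h ∉ h

/-- Player `p` has a winning strategy on `G` when `s` moves first: following it,
every finished play ends with `p` having filled one of their edges (and, the game
having ended right there, the opponent has not filled an edge first). -/
def WinsAs (G : Game) (s p : Player) : Prop :=
  ∃ σ : Strategy, Legal G s p σ ∧
    ∀ h, ValidHist G s h → Follows s p σ h → Complete G s h →
      fills (G.edges p) (picked s p h)

/-- Player `p` has a non-losing strategy on `G` when `s` moves first: following it,
the opponent never fills one of their edges. -/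
def NonLosingAs (G : Game) (s p : Player) : Prop :=
  ∃ σ : Strategy, Legal G s p σ ∧
    ∀ h, ValidHist G s h → Follows s p σ h → Complete G s h →
      ¬ fills (G.edges p.other) (picked s p.other h)

/-- The possible results of the game, for a fixed starting player. -/
inductive Result : Type
  | Lwin : Result
  | draw : Result
  | Rwin : Result
deriving DecidableEq, Repr

/-- The result of `G` with optimal play, when `s` moves first, is `r`:
a win for a player means that player has a winning strategy, a draw means
both players have non-losing strategies. -/
def resultIs (G : Game) (s : Player) : Result → Prop
  | .Lwin => WinsAs G s .L
  | .Rwin => WinsAs G s .R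
  | .draw => NonLosingAs G s .L ∧ NonLosingAs G s .R

/-- An outcome: the pair of results with optimal play
(when Left starts, when Right starts). -/
abbrev Outcome := Result × Result

/-- `G` has outcome `o`. -/
def hasOutcome (G : Game) (o : Outcome) : Prop :=
  resultIs G .L o.1 ∧ resultIs G .R o.2

/-- Numerical value of a result, from Left's point of view:
Right wins < draw < Left wins. -/
def Result.val : Result → ℕ
  | .Rwin => 0
  | .draw => 1
  | .Lwin => 2

/-- The partial order `≤_L` on outcomes, comparing both components simultaneously
from Left's point of view. -/
def outLE (o o' : Outcome) : Prop := o.1.val ≤ o'.1.val ∧ o.2.val ≤ o'.2.val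

def oL : Outcome := (.Lwin, .Lwin)
def oLminus : Outcome := (.Lwin, .draw)
def oN : Outcome := (.Lwin, .Rwin)
def oD : Outcome := (.draw, .draw)
def oRminus : Outcome := (.draw, .Rwin)
def oR : Outcome := (.Rwin, .Rwin)

/-- The updated game `G_u` after Left has picked `u`. -/
def subL (G : Game) (u : ℕ) : Game where
  V := G.V.erase u
  EL := G.EL.image fun e => e.erase u
  ER := G.ER.filter fun e => u ∉ e

/-- The updated game `G^u` after Right has picked `u`. -/
def subR (G : Game) (u : ℕ) : Game where
  V := G.V.erase u
  EL := G.EL.filter fun e => u ∉ e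
  ER := G.ER.image fun e => e.erase u

/-- The updated game `G_u^v` after Left has picked `u` and Right has picked `v`. -/
def updLR (G : Game) (u v : ℕ) : Game where
  V := (G.V.erase u).erase v
  EL := (G.EL.filter fun e => v ∉ e).image fun e => e.erase u
  ER := (G.ER.filter fun e => u ∉ e).image fun e => e.erase v

/-- The disjoint union of two games. -/
def gunion (G G' : Game) : Game where
  V := G.V ∪ G'.V
  EL := G.EL ∪ G'.EL
  ER := G.ER ∪ G'.ER

/-! The proof works with the minimax value of a position (the vertices picked by Left and by
Right, and the player to move), valued `2`, `1`, `0` for a Left win, a draw and a Right win. The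
strategy that always moves to a position of maximal value realises it, so `o(G)` is determined by
the two values of the empty position.

In the union, Left answers every move of Right in `G` by a move in `G` and otherwise plays as in
`G'`. As long as Left has not lost the `G`-part with Right to move there, this keeps the value of
the union position at least that of the `G'`-part; when one component fills up, monotonicity of the
value in Left's picks (an extra vertex never hurts) takes over. Exchanging the roles of the players
gives the reverse inequality, so when `G` is a draw the union has the values, hence the outcome,
of `G'`. -/

lemma Player.other_other : ∀ p : Player, p.other.other = p
  | .L => rfl
  | .R => rfl

lemma Player.other_inj {p q : Player} : p.other = q.other ↔ p = q := by
  cases p <;> cases q <;> decide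

lemma fills_mono {E : Finset (Finset ℕ)} {S T : Finset ℕ} (hST : S ⊆ T) :
    fills E S → fills E T
  | ⟨e, he, heS⟩ => ⟨e, he, heS.trans hST⟩

lemma not_fills_empty {E : Finset (Finset ℕ)} {V : Finset ℕ}
    (hE : ∀ e ∈ E, e ⊆ V ∧ e.Nonempty) :
    ¬ fills E ∅ := fun ⟨e, he, heS⟩ => (hE e he).2.ne_empty (Finset.subset_empty.mp heS)

instance (E : Finset (Finset ℕ)) (S : Finset ℕ) : Decidable (fills E S) := by
  unfold fills; infer_instance

section Value

variable {G : Game} {A A₁ B : Finset ℕ} {u v : ℕ} {t : Player}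

def free (G : Game) (A B : Finset ℕ) : Finset ℕ := G.V \ (A ∪ B)

lemma free_insert_left (u : ℕ) : free G (insert u A) B = (free G A B).erase u := by
  rw [free, free, Finset.insert_union, Finset.sdiff_insert]

lemma free_insert_right (v : ℕ) : free G A (insert v B) = (free G A B).erase v := by
  rw [free, free, Finset.union_insert, Finset.sdiff_insert]

lemma free_anti_left (h : A ⊆ A₁) : free G A₁ B ⊆ free G A B :=
  Finset.sdiff_subset_sdiff subset_rfl (Finset.union_subset_union_left h)

lemma card_free_insert_left_lt (hu : u ∈ free G A B) :
    (free G (insert u A) B).card < (free G A B).card := by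
  rw [free_insert_left]; exact Finset.card_erase_lt_of_mem hu

lemma card_free_insert_right_lt (hv : v ∈ free G A B) :
    (free G A (insert v B)).card < (free G A B).card := by
  rw [free_insert_right]; exact Finset.card_erase_lt_of_mem hv

/-- The minimax value of the position where Left holds `A`, Right holds `B` and `t` is to move,
on the scale of `Result.val`. A completed blue edge is checked first; the position where both
players have completed an edge does not arise in play. -/
def value (G : Game) (A B : Finset ℕ) (t : Player) : ℕ :=
  if fills G.EL A then 2
  else if fills G.ER B then 0
  else if hF : (free G A B).Nonempty then
    match t with
    | .L => (free G A B).attach.sup' hF.attach fun u => value G (insert u.1 A) B .R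
    | .R => (free G A B).attach.inf' hF.attach fun v => value G A (insert v.1 B) .L
  else 1
termination_by (free G A B).card
decreasing_by
  · exact card_free_insert_left_lt u.2
  · exact card_free_insert_right_lt v.2

lemma value_eq_two_of_fills (hA : fills G.EL A) : value G A B t = 2 := by
  rw [value, if_pos hA]

lemma value_eq_zero_of_fills (hA : ¬ fills G.EL A) (hB : fills G.ER B) : value G A B t = 0 := by
  rw [value, if_neg hA, if_pos hB]

lemma value_eq_one_of_free_eq_empty (hA : ¬ fills G.EL A) (hB : ¬ fills G.ER B)
    (hF : free G A B = ∅) : value G A B t = 1 := by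
  rw [value, if_neg hA, if_neg hB, dif_neg (Finset.not_nonempty_iff_eq_empty.mpr hF)]

lemma value_L_eq_sup' (hA : ¬ fills G.EL A) (hB : ¬ fills G.ER B) (hF : (free G A B).Nonempty) :
    value G A B .L = (free G A B).sup' hF fun u => value G (insert u A) B .R := by
  rw [value, if_neg hA, if_neg hB, dif_pos hF]
  exact Finset.sup'_comp_eq_image hF.attach (fun u => value G (insert u A) B .R)
    |>.trans (by simp only [Finset.attach_image_val])

lemma value_R_eq_inf' (hA : ¬ fills G.EL A) (hB : ¬ fills G.ER B) (hF : (free G A B).Nonempty) :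
    value G A B .R = (free G A B).inf' hF fun v => value G A (insert v B) .L := by
  rw [value, if_neg hA, if_neg hB, dif_pos hF]
  exact Finset.inf'_comp_eq_image hF.attach (fun v => value G A (insert v B) .L)
    |>.trans (by simp only [Finset.attach_image_val])

theorem value_le_two (G : Game) (A B : Finset ℕ) (t : Player) : value G A B t ≤ 2 := by
  by_cases hA : fills G.EL A
  · rw [value_eq_two_of_fills hA]
  by_cases hB : fills G.ER B
  · rw [value_eq_zero_of_fills hA hB]; omega
  rcases (free G A B).eq_empty_or_nonempty with hF | hF
  · rw [value_eq_one_of_free_eq_empty hA hB hF]; omega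
  cases t with
  | L =>
    rw [value_L_eq_sup' hA hB hF]
    exact Finset.sup'_le _ _ fun u hu => value_le_two G (insert u A) B .R
  | R =>
    obtain ⟨v, hv⟩ := hF
    rw [value_R_eq_inf' hA hB ⟨v, hv⟩]
    exact (Finset.inf'_le _ hv).trans (value_le_two G A (insert v B) .L)
termination_by (free G A B).card
decreasing_by
  · exact card_free_insert_left_lt hu
  · exact card_free_insert_right_lt hv

lemma value_le_one_of_free_eq_empty (hA : ¬ fills G.EL A) (hF : free G A B = ∅) :
    value G A B t ≤ 1 := by
  by_cases hB : fills G.ER B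
  · rw [value_eq_zero_of_fills hA hB]; omega
  · rw [value_eq_one_of_free_eq_empty hA hB hF]

lemma value_turn_eq_of_free_eq_empty (hF : free G A B = ∅) (t t' : Player) :
    value G A B t = value G A B t' := by
  rw [value, value, dif_neg (Finset.not_nonempty_iff_eq_empty.mpr hF),
    dif_neg (Finset.not_nonempty_iff_eq_empty.mpr hF)]

lemma value_insert_R_le_value_L (hB : ¬ fills G.ER B) (hu : u ∈ free G A B) :
    value G (insert u A) B .R ≤ value G A B .L := by
  by_cases hA : fills G.EL A
  · rw [value_eq_two_of_fills hA]; exact value_le_two ..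
  rw [value_L_eq_sup' hA hB ⟨u, hu⟩]
  exact Finset.le_sup' (fun u => value G (insert u A) B .R) hu

lemma value_R_le_value_insert_L (hA : ¬ fills G.EL A) (hv : v ∈ free G A B) :
    value G A B .R ≤ value G A (insert v B) .L := by
  by_cases hB : fills G.ER B
  · rw [value_eq_zero_of_fills hA hB]; omega
  rw [value_R_eq_inf' hA hB ⟨v, hv⟩]
  exact Finset.inf'_le (fun v => value G A (insert v B) .L) hv

theorem value_mono {A A₁ B : Finset ℕ} (t : Player) (hA : A ⊆ A₁) :
    value G A B t ≤ value G A₁ B t := by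
  by_cases h₁ : fills G.EL A₁
  · rw [value_eq_two_of_fills h₁]; exact value_le_two ..
  have h : ¬ fills G.EL A := fun h => h₁ (fills_mono hA h)
  by_cases hB : fills G.ER B
  · rw [value_eq_zero_of_fills h hB]; omega
  have hsub : free G A₁ B ⊆ free G A B := free_anti_left hA
  cases t with
  | L =>
    rcases (free G A B).eq_empty_or_nonempty with hF | hF
    · rw [value_eq_one_of_free_eq_empty h hB hF,
        value_eq_one_of_free_eq_empty h₁ hB (Finset.subset_empty.mp (hF ▸ hsub))]
    rw [value_L_eq_sup' h hB hF]
    refine Finset.sup'_le _ _ fun u hu => ?_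
    by_cases huA₁ : u ∈ A₁
    · have huA : insert u A ⊆ A₁ := Finset.insert_subset huA₁ hA
      rcases (free G A₁ B).eq_empty_or_nonempty with hF₁ | ⟨w, hw⟩
      · rw [value_turn_eq_of_free_eq_empty hF₁ .L .R]
        exact value_mono .R huA
      · calc value G (insert u A) B .R ≤ value G (insert w A₁) B .R :=
              value_mono .R (huA.trans (Finset.subset_insert w A₁))
          _ ≤ value G A₁ B .L := value_insert_R_le_value_L hB hw
    · have hu₁ : u ∈ free G A₁ B := by
        simp only [free, Finset.mem_sdiff, Finset.mem_union] at hu ⊢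
        tauto
      calc value G (insert u A) B .R ≤ value G (insert u A₁) B .R :=
            value_mono .R (Finset.insert_subset_insert u hA)
        _ ≤ value G A₁ B .L := value_insert_R_le_value_L hB hu₁
  | R =>
    rcases (free G A₁ B).eq_empty_or_nonempty with hF₁ | hF₁
    · rcases (free G A B).eq_empty_or_nonempty with hF | ⟨v, hv⟩
      · rw [value_eq_one_of_free_eq_empty h hB hF, value_eq_one_of_free_eq_empty h₁ hB hF₁]
      have hF₁v : free G A₁ (insert v B) = ∅ := by
        rw [free_insert_right, hF₁, Finset.erase_empty]
      calc value G A B .R ≤ value G A (insert v B) .L := value_R_le_value_insert_L h hv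
        _ ≤ value G A₁ (insert v B) .L := value_mono .L hA
        _ ≤ 1 := value_le_one_of_free_eq_empty h₁ hF₁v
        _ = value G A₁ B .R := (value_eq_one_of_free_eq_empty h₁ hB hF₁).symm
    rw [value_R_eq_inf' h₁ hB hF₁]
    refine Finset.le_inf' _ _ fun v hv₁ => ?_
    have hv : v ∈ free G A B := hsub hv₁
    calc value G A B .R ≤ value G A (insert v B) .L := value_R_le_value_insert_L h hv
      _ ≤ value G A₁ (insert v B) .L := value_mono .L hA
termination_by (free G A B).card
decreasing_by
  all_goals first
    | exact card_free_insert_left_lt ‹_›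
    | exact card_free_insert_right_lt ‹_›

noncomputable def bestMove (G : Game) (A B : Finset ℕ) : ℕ :=
  if hF : (free G A B).Nonempty then
    (Finset.exists_max_image (free G A B) (fun u => value G (insert u A) B .R) hF).choose
  else 0

lemma bestMove_spec (hF : (free G A B).Nonempty) :
    bestMove G A B ∈ free G A B ∧
      ∀ u ∈ free G A B,
        value G (insert u A) B .R ≤ value G (insert (bestMove G A B) A) B .R := by
  rw [bestMove, dif_pos hF]
  exact (Finset.exists_max_image (free G A B) (fun u => value G (insert u A) B .R) hF).choose_spec

lemma value_L_eq_bestMove (hA : ¬ fills G.EL A) (hB : ¬ fills G.ER B)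
    (hF : (free G A B).Nonempty) :
    value G A B .L = value G (insert (bestMove G A B) A) B .R := by
  refine le_antisymm ?_ (value_insert_R_le_value_L hB (bestMove_spec hF).1)
  rw [value_L_eq_sup' hA hB hF]
  exact Finset.sup'_le _ _ (bestMove_spec hF).2

end Value

section Swap

lemma _root_.Antitone.map_finset_inf' {ι α β : Type*} [LinearOrder α] [LinearOrder β]
    {g : α → β} (hg : Antitone g) {s : Finset ι} (hs : s.Nonempty) (f : ι → α) :
    g (s.inf' hs f) = s.sup' hs fun i => g (f i) := by
  obtain ⟨i, hi, hmin⟩ := Finset.exists_mem_eq_inf' hs f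
  refine le_antisymm ?_ (Finset.sup'_le _ _ fun j hj => hg (Finset.inf'_le f hj))
  rw [hmin]
  exact Finset.le_sup' (fun i => g (f i)) hi

lemma _root_.Antitone.map_finset_sup' {ι α β : Type*} [LinearOrder α] [LinearOrder β]
    {g : α → β} (hg : Antitone g) {s : Finset ι} (hs : s.Nonempty) (f : ι → α) :
    g (s.sup' hs f) = s.inf' hs fun i => g (f i) := by
  obtain ⟨i, hi, hmax⟩ := Finset.exists_mem_eq_sup' hs f
  refine le_antisymm (Finset.le_inf' _ _ fun j hj => hg (Finset.le_sup' f hj)) ?_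
  rw [hmax]
  exact Finset.inf'_le (fun i => g (f i)) hi

def Game.swap (G : Game) : Game := ⟨G.V, G.ER, G.EL⟩

lemma Game.swap_edges (G : Game) (p : Player) : G.swap.edges p.other = G.edges p := by
  cases p <;> rfl

lemma wellFormed_swap {G : Game} (hG : WellFormed G) : WellFormed G.swap := ⟨hG.2, hG.1⟩

theorem value_swap {G : Game} {A B : Finset ℕ} (t : Player)
    (h : ¬ (fills G.ER A ∧ fills G.EL B)) :
    value G.swap A B t = 2 - value G B A t.other := by
  have hfree : free G.swap A B = free G B A := by rw [free, free, Finset.union_comm]; rfl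
  have htwo : Antitone fun x : ℕ => 2 - x := fun _ _ hxy => Nat.sub_le_sub_left hxy 2
  by_cases hA : fills G.ER A
  · have hB : ¬ fills G.EL B := fun hB => h ⟨hA, hB⟩
    rw [value_eq_two_of_fills (G := G.swap) hA, value_eq_zero_of_fills hB hA]
  by_cases hB : fills G.EL B
  · rw [value_eq_zero_of_fills (G := G.swap) hA hB, value_eq_two_of_fills hB]
  rcases (free G B A).eq_empty_or_nonempty with hF | hF
  · rw [value_eq_one_of_free_eq_empty (G := G.swap) hA hB (hfree.trans hF),
      value_eq_one_of_free_eq_empty hB hA hF]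
  cases t with
  | L =>
    rw [value_L_eq_sup' (G := G.swap) hA hB (hfree ▸ hF), show Player.L.other = .R from rfl,
      value_R_eq_inf' hB hA hF, htwo.map_finset_inf']
    exact Finset.sup'_congr _ hfree fun u hu => value_swap .R fun h' => hB h'.2
  | R =>
    rw [value_R_eq_inf' (G := G.swap) hA hB (hfree ▸ hF), show Player.R.other = .L from rfl,
      value_L_eq_sup' hB hA hF, htwo.map_finset_sup']
    exact Finset.inf'_congr _ hfree fun v hv => value_swap .L fun h' => hA h'.1
termination_by (free G B A).card
decreasing_by
  · exact card_free_insert_right_lt (hfree ▸ hu)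
  · exact card_free_insert_left_lt (hfree ▸ hv)

lemma value_swap_empty {G : Game} (hG : WellFormed G) (t : Player) :
    value G.swap ∅ ∅ t = 2 - value G ∅ ∅ t.other :=
  value_swap t fun h => not_fills_empty hG.2 h.1

end Swap

section Union

variable {G G' : Game} {A B A' B' : Finset ℕ} {u v : ℕ}

lemma wellFormed_gunion (hG : WellFormed G) (hG' : WellFormed G') :
    WellFormed (gunion G G') := by
  refine ⟨fun e he => ?_, fun e he => ?_⟩ <;> rcases Finset.mem_union.mp he with he | he
  · exact ⟨(hG.1 e he).1.trans Finset.subset_union_left, (hG.1 e he).2⟩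
  · exact ⟨(hG'.1 e he).1.trans Finset.subset_union_right, (hG'.1 e he).2⟩
  · exact ⟨(hG.2 e he).1.trans Finset.subset_union_left, (hG.2 e he).2⟩
  · exact ⟨(hG'.2 e he).1.trans Finset.subset_union_right, (hG'.2 e he).2⟩

lemma fills_union_iff {E E' : Finset (Finset ℕ)} {V V' S S' : Finset ℕ} (hVV' : Disjoint V V')
    (hE : ∀ e ∈ E, e ⊆ V) (hE' : ∀ e ∈ E', e ⊆ V') (hS : S ⊆ V) (hS' : S' ⊆ V') :
    fills (E ∪ E') (S ∪ S') ↔ fills E S ∨ fills E' S' := by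
  refine ⟨fun ⟨e, he, heS⟩ => ?_, ?_⟩
  · rcases Finset.mem_union.mp he with he | he
    · refine Or.inl ⟨e, he, Disjoint.left_le_of_le_sup_right heS ?_⟩
      exact (hVV'.mono_left (hE e he)).mono_right hS'
    · refine Or.inr ⟨e, he, Disjoint.left_le_of_le_sup_left heS ?_⟩
      exact (hVV'.symm.mono_left (hE' e he)).mono_right hS
  · rintro (⟨e, he, heS⟩ | ⟨e, he, heS⟩)
    · exact ⟨e, Finset.mem_union_left _ he, heS.trans Finset.subset_union_left⟩
    · exact ⟨e, Finset.mem_union_right _ he, heS.trans Finset.subset_union_right⟩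

lemma free_gunion (hdisj : Disjoint G.V G'.V) (hAB : A ∪ B ⊆ G.V) (hAB' : A' ∪ B' ⊆ G'.V) :
    free (gunion G G') (A ∪ A') (B ∪ B') = free G A B ∪ free G' A' B' := by
  have hG : ∀ x ∈ G.V, x ∉ A' ∪ B' := fun x hx hx' =>
    Finset.disjoint_left.mp hdisj hx (hAB' hx')
  have hG' : ∀ x ∈ G'.V, x ∉ A ∪ B := fun x hx' hx =>
    Finset.disjoint_left.mp hdisj (hAB hx) hx'
  ext x
  simp only [free, gunion, Finset.mem_sdiff, Finset.mem_union] at hG hG' ⊢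
  grind

lemma insert_union_subset_of_mem_free (hAB : A ∪ B ⊆ G.V) (hu : u ∈ free G A B) :
    insert u A ∪ B ⊆ G.V := by
  rw [Finset.insert_union]; exact Finset.insert_subset (Finset.mem_sdiff.mp hu).1 hAB

lemma union_insert_subset_of_mem_free (hAB : A ∪ B ⊆ G.V) (hv : v ∈ free G A B) :
    A ∪ insert v B ⊆ G.V := by
  rw [Finset.union_insert]; exact Finset.insert_subset (Finset.mem_sdiff.mp hv).1 hAB

lemma value_le_value_gunion_or_live (hG : WellFormed G) (hG' : WellFormed G')
    (hdisj : Disjoint G.V G'.V) (hAB : A ∪ B ⊆ G.V) (hAB' : A' ∪ B' ⊆ G'.V) {τ : Player}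
    (hτ : 1 ≤ value G A B τ) :
    (∀ t t', value G' A' B' t' ≤ value (gunion G G') (A ∪ A') (B ∪ B') t) ∨
      (¬ fills G.EL A ∧ ¬ fills G'.EL A' ∧ ¬ fills G.ER B ∧ ¬ fills G'.ER B' ∧
        ¬ fills (gunion G G').EL (A ∪ A') ∧ ¬ fills (gunion G G').ER (B ∪ B') ∧
        (free (gunion G G') (A ∪ A') (B ∪ B')).Nonempty) := by
  have hUL : fills (gunion G G').EL (A ∪ A') ↔ fills G.EL A ∨ fills G'.EL A' :=
    fills_union_iff hdisj (fun e he => (hG.1 e he).1) (fun e he => (hG'.1 e he).1)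
      (Finset.subset_union_left.trans hAB) (Finset.subset_union_left.trans hAB')
  have hUR : fills (gunion G G').ER (B ∪ B') ↔ fills G.ER B ∨ fills G'.ER B' :=
    fills_union_iff hdisj (fun e he => (hG.2 e he).1) (fun e he => (hG'.2 e he).1)
      (Finset.subset_union_right.trans hAB) (Finset.subset_union_right.trans hAB')
  by_cases hwin : fills G.EL A ∨ fills G'.EL A'
  · refine Or.inl fun t t' => ?_
    rw [value_eq_two_of_fills (hUL.mpr hwin)]
    exact value_le_two ..
  obtain ⟨hA, hA'⟩ := not_or.mp hwin
  have hB : ¬ fills G.ER B := fun hB => by rw [value_eq_zero_of_fills hA hB] at hτ; omega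
  by_cases hB' : fills G'.ER B'
  · refine Or.inl fun t t' => ?_
    rw [value_eq_zero_of_fills hA' hB']
    omega
  have hUA : ¬ fills (gunion G G').EL (A ∪ A') := by rw [hUL]; tauto
  have hUB : ¬ fills (gunion G G').ER (B ∪ B') := by rw [hUR]; tauto
  rcases (free (gunion G G') (A ∪ A') (B ∪ B')).eq_empty_or_nonempty with hFU | hFU
  · refine Or.inl fun t t' => ?_
    rw [value_eq_one_of_free_eq_empty hUA hUB hFU]
    refine value_le_one_of_free_eq_empty hA' (Finset.subset_empty.mp ?_)
    rw [← hFU, free_gunion hdisj hAB hAB']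
    exact Finset.subset_union_right
  · exact Or.inr ⟨hA, hA', hB, hB', hUA, hUB, hFU⟩

/- `reply` is the position just after Right has moved in `G`, where Left owes the answer. -/
mutual

theorem value_le_value_gunion_L (hG : WellFormed G) (hG' : WellFormed G')
    (hdisj : Disjoint G.V G'.V) {A B A' B' : Finset ℕ} (hAB : A ∪ B ⊆ G.V)
    (hAB' : A' ∪ B' ⊆ G'.V) (h : 1 ≤ value G A B .R) :
    value G' A' B' .L ≤ value (gunion G G') (A ∪ A') (B ∪ B') .L := by
  rcases value_le_value_gunion_or_live hG hG' hdisj hAB hAB' h with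
    hle | ⟨-, hA', -, hB', -, hUB, hFU⟩
  · exact hle _ _
  have hU := free_gunion hdisj hAB hAB'
  rcases (free G' A' B').eq_empty_or_nonempty with hF' | hF'
  · obtain ⟨u, hu⟩ : (free G A B).Nonempty := by
      rwa [hU, hF', Finset.union_empty] at hFU
    calc value G' A' B' .L = value G' A' B' .R := value_turn_eq_of_free_eq_empty hF' _ _
      _ ≤ value (gunion G G') (insert u A ∪ A') (B ∪ B') .R :=
          value_le_value_gunion_R hG hG' hdisj (insert_union_subset_of_mem_free hAB hu) hAB'
            (h.trans (value_mono .R (Finset.subset_insert u A)))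
      _ ≤ value (gunion G G') (A ∪ A') (B ∪ B') .L := by
          rw [Finset.insert_union]
          exact value_insert_R_le_value_L hUB (hU ▸ Finset.mem_union_left _ hu)
  · rw [value_L_eq_sup' hA' hB' hF']
    refine Finset.sup'_le _ _ fun u hu => ?_
    calc value G' (insert u A') B' .R ≤ value (gunion G G') (A ∪ insert u A') (B ∪ B') .R :=
          value_le_value_gunion_R hG hG' hdisj hAB (insert_union_subset_of_mem_free hAB' hu) h
      _ ≤ value (gunion G G') (A ∪ A') (B ∪ B') .L := by
          rw [Finset.union_insert]
          exact value_insert_R_le_value_L hUB (hU ▸ Finset.mem_union_right _ hu)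
termination_by (free G A B).card + (free G' A' B').card
decreasing_by
  · exact Nat.add_lt_add_right (card_free_insert_left_lt hu) _
  · exact Nat.add_lt_add_left (card_free_insert_left_lt hu) _

theorem value_le_value_gunion_R (hG : WellFormed G) (hG' : WellFormed G')
    (hdisj : Disjoint G.V G'.V) {A B A' B' : Finset ℕ} (hAB : A ∪ B ⊆ G.V)
    (hAB' : A' ∪ B' ⊆ G'.V) (h : 1 ≤ value G A B .R) :
    value G' A' B' .R ≤ value (gunion G G') (A ∪ A') (B ∪ B') .R := by
  rcases value_le_value_gunion_or_live hG hG' hdisj hAB hAB' h with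
    hle | ⟨hA, hA', -, -, hUA, hUB, hFU⟩
  · exact hle _ _
  rw [value_R_eq_inf' hUA hUB hFU]
  refine Finset.le_inf' _ _ fun v hv => ?_
  rcases Finset.mem_union.mp (free_gunion hdisj hAB hAB' ▸ hv) with hvG | hvG'
  · rw [← Finset.insert_union]
    exact value_le_value_gunion_reply hG hG' hdisj (union_insert_subset_of_mem_free hAB hvG) hAB'
      (h.trans (value_R_le_value_insert_L hA hvG))
  · calc value G' A' B' .R ≤ value G' A' (insert v B') .L := value_R_le_value_insert_L hA' hvG'
      _ ≤ value (gunion G G') (A ∪ A') (B ∪ insert v B') .L :=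
          value_le_value_gunion_L hG hG' hdisj hAB (union_insert_subset_of_mem_free hAB' hvG') h
      _ = value (gunion G G') (A ∪ A') (insert v (B ∪ B')) .L := by rw [Finset.union_insert]
termination_by (free G A B).card + (free G' A' B').card
decreasing_by
  · exact Nat.add_lt_add_right (card_free_insert_right_lt hvG) _
  · exact Nat.add_lt_add_left (card_free_insert_right_lt hvG') _

theorem value_le_value_gunion_reply (hG : WellFormed G) (hG' : WellFormed G')
    (hdisj : Disjoint G.V G'.V) {A B A' B' : Finset ℕ} (hAB : A ∪ B ⊆ G.V)
    (hAB' : A' ∪ B' ⊆ G'.V) (h : 1 ≤ value G A B .L) :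
    value G' A' B' .R ≤ value (gunion G G') (A ∪ A') (B ∪ B') .L := by
  rcases value_le_value_gunion_or_live hG hG' hdisj hAB hAB' h with
    hle | ⟨hA, -, hB, -, -, hUB, hFU⟩
  · exact hle _ _
  have hU := free_gunion hdisj hAB hAB'
  rcases (free G A B).eq_empty_or_nonempty with hF | hF
  · obtain ⟨u, hu⟩ : (free G' A' B').Nonempty := by
      rwa [hU, hF, Finset.empty_union] at hFU
    calc value G' A' B' .R ≤ value G' (insert u A') B' .R :=
          value_mono .R (Finset.subset_insert u A')
      _ ≤ value (gunion G G') (A ∪ insert u A') (B ∪ B') .R :=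
          value_le_value_gunion_R hG hG' hdisj hAB (insert_union_subset_of_mem_free hAB' hu)
            (h.trans_eq (value_turn_eq_of_free_eq_empty hF _ _))
      _ ≤ value (gunion G G') (A ∪ A') (B ∪ B') .L := by
          rw [Finset.union_insert]
          exact value_insert_R_le_value_L hUB (hU ▸ Finset.mem_union_right _ hu)
  · have hu := (bestMove_spec hF).1
    calc value G' A' B' .R
        ≤ value (gunion G G') (insert (bestMove G A B) A ∪ A') (B ∪ B') .R :=
          value_le_value_gunion_R hG hG' hdisj (insert_union_subset_of_mem_free hAB hu) hAB'
            (h.trans_eq (value_L_eq_bestMove hA hB hF))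
      _ ≤ value (gunion G G') (A ∪ A') (B ∪ B') .L := by
          rw [Finset.insert_union]
          exact value_insert_R_le_value_L hUB (hU ▸ Finset.mem_union_left _ hu)
termination_by (free G A B).card + (free G' A' B').card
decreasing_by
  · exact Nat.add_lt_add_left (card_free_insert_left_lt hu) _
  · exact Nat.add_lt_add_right (card_free_insert_left_lt hu) _

end

lemma value_le_value_gunion_empty (hG : WellFormed G) (hG' : WellFormed G')
    (hdisj : Disjoint G.V G'.V) (h : 1 ≤ value G ∅ ∅ .R) (t : Player) :
    value G' ∅ ∅ t ≤ value (gunion G G') ∅ ∅ t := by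
  have hAB : (∅ : Finset ℕ) ∪ ∅ ⊆ G.V := by simp
  have hAB' : (∅ : Finset ℕ) ∪ ∅ ⊆ G'.V := by simp
  cases t
  · simpa using value_le_value_gunion_L hG hG' hdisj hAB hAB' h
  · simpa using value_le_value_gunion_R hG hG' hdisj hAB hAB' h

theorem value_gunion_of_draw (hG : WellFormed G) (hG' : WellFormed G')
    (hdisj : Disjoint G.V G'.V) (hL : value G ∅ ∅ .L ≤ 1) (hR : 1 ≤ value G ∅ ∅ .R)
    (t : Player) : value (gunion G G') ∅ ∅ t = value G' ∅ ∅ t := by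
  refine le_antisymm ?_ (value_le_value_gunion_empty hG hG' hdisj hR t)
  have hswap := value_le_value_gunion_empty (wellFormed_swap hG) (wellFormed_swap hG') hdisj
    (by rw [value_swap_empty hG]; exact Nat.le_sub_of_add_le (Nat.add_le_add_left hL 1)) t.other
  rw [show gunion G.swap G'.swap = (gunion G G').swap from rfl, value_swap_empty hG',
    value_swap_empty (wellFormed_gunion hG hG'), Player.other_other] at hswap
  have := value_le_two (gunion G G') ∅ ∅ t
  omega

end Union

section History

variable {G : Game} {s p : Player} {σ : Strategy} {h : List ℕ} {x : ℕ}

lemma mover_succ (s : Player) (n : ℕ) : mover s (n + 1) = (mover s n).other := by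
  rcases Nat.mod_two_eq_zero_or_one n with hn | hn
  · simp [mover, hn, Nat.succ_mod_two_eq_one_iff.mpr hn]
  · simp [mover, hn, Nat.succ_mod_two_eq_zero_iff.mpr hn, Player.other_other]

lemma mover_other (s : Player) (n : ℕ) : mover s.other n = (mover s n).other := by
  unfold mover; split <;> rfl

lemma picked_concat :
    picked s p (h ++ [x]) =
      if mover s h.length = p then insert x (picked s p h) else picked s p h := by
  have hold : ((Finset.range h.length).filter fun i => mover s i = p).image
      (fun i => (h ++ [x]).getD i 0) = picked s p h :=
    Finset.image_congr fun i hi => List.getD_append _ _ _ _ (Finset.mem_range.mp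
      (Finset.mem_filter.mp hi).1)
  have hnew : (h ++ [x]).getD h.length 0 = x := by simp
  rw [picked, List.length_append, List.length_singleton, Finset.range_add_one,
    Finset.filter_insert]
  split_ifs <;> simp only [Finset.image_insert, hold, hnew]

lemma picked_L_union_picked_R : picked s .L h ∪ picked s .R h = h.toFinset := by
  ext y
  simp only [picked, Finset.mem_union, Finset.mem_image, Finset.mem_filter, Finset.mem_range,
    List.mem_toFinset, List.mem_iff_getElem]
  constructor
  · rintro (⟨i, ⟨hi, -⟩, rfl⟩ | ⟨i, ⟨hi, -⟩, rfl⟩) <;>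
      exact ⟨i, hi, (List.getD_eq_getElem _ _ hi).symm⟩
  · rintro ⟨i, hi, rfl⟩
    cases hm : mover s i
    · exact Or.inl ⟨i, ⟨hi, hm⟩, List.getD_eq_getElem _ _ hi⟩
    · exact Or.inr ⟨i, ⟨hi, hm⟩, List.getD_eq_getElem _ _ hi⟩

lemma picked_other : picked s.other p.other h = picked s p h := by
  unfold picked
  congr 1
  refine Finset.filter_congr fun i _ => ?_
  rw [mover_other]
  cases mover s i <;> cases p <;> decide

lemma validHist_nil : ValidHist G s [] :=
  ⟨List.nodup_nil, by simp, by simp⟩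

lemma validHist_concat_iff :
    ValidHist G s (h ++ [x]) ↔ ValidHist G s h ∧ ¬ ended G s h ∧ x ∈ G.V ∧ x ∉ h := by
  have htake : ∀ k < h.length, (h ++ [x]).take k = h.take k := fun k hk =>
    List.take_append_of_le_length hk.le
  have hnodup : (h ++ [x]).Nodup ↔ x ∉ h ∧ h.Nodup := by
    rw [← List.concat_eq_append, List.nodup_concat]
  simp only [ValidHist, hnodup, List.length_append, List.length_singleton,
    Nat.forall_lt_succ_right, List.take_left, List.forall_mem_append, List.forall_mem_singleton]
  constructor
  · rintro ⟨⟨hx, hnd⟩, ⟨hV, hxV⟩, hpre, hend⟩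
    exact ⟨⟨hnd, hV, fun k hk => htake k hk ▸ hpre k hk⟩, hend, hxV, hx⟩
  · rintro ⟨⟨hnd, hV, hpre⟩, hend, hxV, hx⟩
    exact ⟨⟨hx, hnd⟩, ⟨hV, hxV⟩, fun k hk => (htake k hk).symm ▸ hpre k hk, hend⟩

lemma follows_nil : Follows s p σ [] := by simp [Follows]

lemma follows_concat_iff :
    Follows s p σ (h ++ [x]) ↔ Follows s p σ h ∧ (mover s h.length = p → x = σ h) := by
  have hold : ∀ k < h.length, (h ++ [x]).getD k 0 = h.getD k 0 ∧ (h ++ [x]).take k = h.take k :=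
    fun k hk => ⟨List.getD_append _ _ _ _ hk, List.take_append_of_le_length hk.le⟩
  simp only [Follows, List.length_append, List.length_singleton, Nat.forall_lt_succ_right,
    List.take_left]
  rw [show (h ++ [x]).getD h.length 0 = x by simp]
  refine and_congr_left' (forall₂_congr fun k hk => ?_)
  rw [(hold k hk).1, (hold k hk).2]

end History

section Strategy

variable {G : Game} {s : Player} {h : List ℕ}

lemma toFinset_subset_of_validHist (hv : ValidHist G s h) : h.toFinset ⊆ G.V :=
  fun _ hy => hv.2.1 _ (List.mem_toFinset.mp hy)

lemma length_le_card_of_validHist (hv : ValidHist G s h) : h.length ≤ G.V.card :=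
  List.toFinset_card_of_nodup hv.1 ▸ Finset.card_le_card (toFinset_subset_of_validHist hv)

lemma free_picked : free G (picked s .L h) (picked s .R h) = G.V \ h.toFinset := by
  rw [free, picked_L_union_picked_R]

lemma card_free_picked (hv : ValidHist G s h) :
    (free G (picked s .L h) (picked s .R h)).card = G.V.card - h.length := by
  rw [free_picked, Finset.card_sdiff_of_subset (toFinset_subset_of_validHist hv),
    List.toFinset_card_of_nodup hv.1]

lemma not_fills_both (hG : WellFormed G) (hv : ValidHist G s h) :
    ¬ (fills G.EL (picked s .L h) ∧ fills G.ER (picked s .R h)) := by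
  rcases List.eq_nil_or_concat' h with rfl | ⟨h, x, rfl⟩
  · exact fun hL => not_fills_empty hG.1 hL.1
  obtain ⟨-, hend, -, -⟩ := validHist_concat_iff.mp hv
  rintro ⟨hL, hR⟩
  rw [picked_concat] at hL hR
  cases hm : mover s h.length <;> simp only [hm, reduceCtorEq, if_false] at hL hR
  · exact hend (Or.inr hR)
  · exact hend (Or.inl hL)

noncomputable def bestMoveStrategy (G : Game) (s : Player) : Strategy :=
  fun h => bestMove G (picked s .L h) (picked s .R h)

lemma legal_bestMoveStrategy : Legal G s .L (bestMoveStrategy G s) := by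
  intro h hv _ _ hlen _
  have hF : (free G (picked s .L h) (picked s .R h)).Nonempty := by
    rw [← Finset.card_pos, card_free_picked hv]; omega
  have hmem := (bestMove_spec hF).1
  rwa [free_picked, Finset.mem_sdiff, List.mem_toFinset] at hmem

lemma value_le_value_picked (hv : ValidHist G s h) (hf : Follows s .L (bestMoveStrategy G s) h) :
    value G ∅ ∅ s ≤ value G (picked s .L h) (picked s .R h) (mover s h.length) := by
  induction h using List.reverseRecOn with
  | nil => rfl
  | append_singleton h x ih =>
    obtain ⟨hv, hend, hxV, hxh⟩ := validHist_concat_iff.mp hv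
    obtain ⟨hf, hx⟩ := follows_concat_iff.mp hf
    obtain ⟨hA, hB⟩ := not_or.mp hend
    have hxF : x ∈ free G (picked s .L h) (picked s .R h) := by
      rw [free_picked, Finset.mem_sdiff, List.mem_toFinset]; exact ⟨hxV, hxh⟩
    refine (ih hv hf).trans ?_
    rw [List.length_append, List.length_singleton, mover_succ, picked_concat, picked_concat]
    cases hm : mover s h.length <;> simp only [reduceCtorEq, if_true, if_false]
    · rw [hx hm]
      exact (value_L_eq_bestMove hA hB ⟨x, hxF⟩).le
    · exact value_R_le_value_insert_L hA hxF

lemma nonLosingAs_L_of_one_le_value (hG : WellFormed G) (hval : 1 ≤ value G ∅ ∅ s) :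
    NonLosingAs G s .L := by
  refine ⟨bestMoveStrategy G s, legal_bestMoveStrategy,
    fun h hv hf _ (hR : fills G.ER (picked s .R h)) => ?_⟩
  have hinv := value_le_value_picked hv hf
  rw [value_eq_zero_of_fills (fun hL => not_fills_both hG hv ⟨hL, hR⟩) hR] at hinv
  omega

lemma winsAs_L_of_value_eq_two (hval : value G ∅ ∅ s = 2) : WinsAs G s .L := by
  refine ⟨bestMoveStrategy G s, legal_bestMoveStrategy, fun h hv hf hc => ?_⟩
  have hinv := value_le_value_picked hv hf
  by_contra hL
  have hR : ¬ fills G.ER (picked s .R h) := fun hR => by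
    rw [value_eq_zero_of_fills hL hR] at hinv; omega
  have hF : free G (picked s .L h) (picked s .R h) = ∅ := by
    rw [← Finset.card_eq_zero, card_free_picked hv, hc.resolve_left (not_or.mpr ⟨hL, hR⟩),
      Nat.sub_self]
  rw [value_eq_one_of_free_eq_empty hL hR hF] at hinv
  omega

end Strategy

section SwapHistory

variable {G : Game} {s p : Player} {σ : Strategy} {h : List ℕ}

lemma ended_swap : ended G.swap s.other h ↔ ended G s h := by
  have hL : picked s.other .L h = picked s .R h := picked_other (p := .R)
  have hR : picked s.other .R h = picked s .L h := picked_other (p := .L)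
  rw [ended, ended, hL, hR, or_comm]
  exact Iff.rfl

lemma validHist_swap : ValidHist G.swap s.other h ↔ ValidHist G s h := by
  simp only [ValidHist, ended_swap]
  exact Iff.rfl

lemma follows_swap : Follows s.other p.other σ h ↔ Follows s p σ h := by
  simp only [Follows, mover_other, Player.other_inj]

lemma complete_swap : Complete G.swap s.other h ↔ Complete G s h := by
  rw [Complete, Complete, ended_swap]
  exact Iff.rfl

lemma legal_swap : Legal G.swap s.other p.other σ ↔ Legal G s p σ := by
  simp only [Legal, validHist_swap, follows_swap, ended_swap, mover_other, Player.other_inj]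
  exact Iff.rfl

lemma winsAs_swap : WinsAs G.swap s.other p.other ↔ WinsAs G s p := by
  simp only [WinsAs, legal_swap, validHist_swap, follows_swap, complete_swap, Game.swap_edges,
    picked_other]

lemma nonLosingAs_swap : NonLosingAs G.swap s.other p.other ↔ NonLosingAs G s p := by
  simp only [NonLosingAs, legal_swap, validHist_swap, follows_swap, complete_swap,
    Game.swap_edges, picked_other]

end SwapHistory

section Outcome

variable {G : Game} {s p : Player} {σL σR : Strategy}

lemma nonLosingAs_R_of_value_le_one (hG : WellFormed G) (hval : value G ∅ ∅ s ≤ 1) :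
    NonLosingAs G s .R := by
  rw [← nonLosingAs_swap]
  refine nonLosingAs_L_of_one_le_value (wellFormed_swap hG) ?_
  rw [value_swap_empty hG, Player.other_other]
  omega

lemma winsAs_R_of_value_eq_zero (hG : WellFormed G) (hval : value G ∅ ∅ s = 0) :
    WinsAs G s .R := by
  rw [← winsAs_swap]
  refine winsAs_L_of_value_eq_two ?_
  rw [value_swap_empty hG, Player.other_other, hval]

lemma exists_complete_extension (hL : Legal G s .L σL) (hR : Legal G s .R σR) (h : List ℕ)
    (hv : ValidHist G s h) (hfL : Follows s .L σL h) (hfR : Follows s .R σR h) :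
    ∃ h', ValidHist G s h' ∧ Follows s .L σL h' ∧ Follows s .R σR h' ∧
      Complete G s h' := by
  by_cases hc : Complete G s h
  · exact ⟨h, hv, hfL, hfR, hc⟩
  obtain ⟨hend, hlen⟩ := not_or.mp hc
  have hlt : h.length < G.V.card := lt_of_le_of_ne (length_le_card_of_validHist hv) hlen
  set x := if mover s h.length = .L then σL h else σR h with hx
  have hxV : x ∈ G.V ∧ x ∉ h := by
    cases hm : mover s h.length <;> simp only [hx, hm, reduceCtorEq, if_true, if_false]
    · exact hL h hv hfL hend hlt hm
    · exact hR h hv hfR hend hlt hm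
  exact exists_complete_extension hL hR (h ++ [x]) (validHist_concat_iff.mpr ⟨hv, hend, hxV⟩)
    (follows_concat_iff.mpr ⟨hfL, fun hm => by rw [hx, if_pos hm]⟩)
    (follows_concat_iff.mpr ⟨hfR, fun hm => by rw [hx, hm, if_neg (by decide)]⟩)
termination_by G.V.card - h.length
decreasing_by rw [List.length_append, List.length_singleton]; omega

lemma not_winsAs_and_nonLosingAs_other : ¬ (WinsAs G s p ∧ NonLosingAs G s p.other) := by
  rintro ⟨⟨σ, hσ, hwin⟩, ⟨τ, hτ, hsafe⟩⟩
  cases p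
  · obtain ⟨h, hv, hf, hf', hc⟩ := exists_complete_extension hσ hτ [] validHist_nil
      follows_nil follows_nil
    exact hsafe h hv hf' hc (hwin h hv hf hc)
  · obtain ⟨h, hv, hf', hf, hc⟩ := exists_complete_extension hτ hσ [] validHist_nil
      follows_nil follows_nil
    exact hsafe h hv hf' hc (hwin h hv hf hc)

lemma resultIs_iff_value (hG : WellFormed G) (s : Player) (r : Result) :
    resultIs G s r ↔ value G ∅ ∅ s = r.val := by
  have hle := value_le_two G ∅ ∅ s
  have winsL : WinsAs G s .L ↔ value G ∅ ∅ s = 2 :=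
    ⟨fun hw => by_contra fun hne => not_winsAs_and_nonLosingAs_other
      ⟨hw, nonLosingAs_R_of_value_le_one hG (by omega)⟩, winsAs_L_of_value_eq_two⟩
  have winsR : WinsAs G s .R ↔ value G ∅ ∅ s = 0 :=
    ⟨fun hw => by_contra fun hne => not_winsAs_and_nonLosingAs_other
      ⟨hw, nonLosingAs_L_of_one_le_value hG (by omega)⟩, winsAs_R_of_value_eq_zero hG⟩
  have safeL : NonLosingAs G s .L ↔ 1 ≤ value G ∅ ∅ s :=
    ⟨fun hn => by_contra fun hlt => not_winsAs_and_nonLosingAs_other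
      ⟨winsAs_R_of_value_eq_zero hG (by omega), hn⟩, nonLosingAs_L_of_one_le_value hG⟩
  have safeR : NonLosingAs G s .R ↔ value G ∅ ∅ s ≤ 1 :=
    ⟨fun hn => by_contra fun hlt => not_winsAs_and_nonLosingAs_other
      ⟨winsAs_L_of_value_eq_two (by omega), hn⟩, nonLosingAs_R_of_value_le_one hG⟩
  cases r
  · exact winsL
  · rw [resultIs, safeL, safeR, Result.val]; omega
  · exact winsR

lemma hasOutcome_iff_value (hG : WellFormed G) (o : Outcome) :
    hasOutcome G o ↔ value G ∅ ∅ .L = o.1.val ∧ value G ∅ ∅ .R = o.2.val := by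
  rw [hasOutcome, resultIs_iff_value hG, resultIs_iff_value hG]

end Outcome

/-- If `o(G) = D`, then `o(G ∪ G') = o(G')`. -/
theorem union_with_draw (G G' : Game) (hG : WellFormed G) (hG' : WellFormed G')
    (hdisj : Disjoint G.V G'.V) (hD : hasOutcome G oD) :
    ∀ o : Outcome, hasOutcome G' o ↔ hasOutcome (gunion G G') o := by
  intro o
  obtain ⟨hL, hR⟩ := (hasOutcome_iff_value hG oD).mp hD
  rw [hasOutcome_iff_value hG', hasOutcome_iff_value (wellFormed_gunion hG hG'),
    value_gunion_of_draw hG hG' hdisj hL.le hR.ge, value_gunion_of_draw hG hG' hdisj hL.le hR.ge]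

end APG
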